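/- Between any two distinct vertices of G̅_q there is a unique minimum path; in particular, G̅_q contains no 4-cycle and has diameter 2. -/

import Mathlib

open Projectivization

/-- Orthogonality of projective points: scalar product of representatives is zero. -/
def ortho {F : Type} [Field F] (P L : Projectivization F (Fin 3 → F)) : Prop :=
  dotProduct P.rep L.rep = 0

instance {F : Type} [Field F] [Finite F] :
    Finite (Projectivization F (Fin 3 → F)) := Quotient.finite _

noncomputable instance {F : Type} [Field F] [Fintype F] :
    Fintype (Projectivization F (Fin 3 → F)) := Fintype.ofFinite _

/-- The incidence graph `G_q` of the projective plane over `F`. -/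
def projGraph (F : Type) [Field F] :
    SimpleGraph (Bool × Projectivization F (Fin 3 → F)) where
  Adj v w := v.1 ≠ w.1 ∧ ortho v.2 w.2
  symm := ⟨by
    rintro ⟨s, P⟩ ⟨t, L⟩ ⟨h1, h2⟩
    exact ⟨h1.symm, by rwa [ortho, dotProduct_comm]⟩⟩
  loopless := ⟨by rintro ⟨s, P⟩ ⟨h, _⟩; exact h rfl⟩

/-- The modified incidence (polarity) graph `G̅_q` of the projective plane over `F`. -/
def polarityGraph (F : Type) [Field F] :
    SimpleGraph (Projectivization F (Fin 3 → F)) where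
  Adj P L := P ≠ L ∧ ortho P L
  symm := ⟨by
    rintro P L ⟨h1, h2⟩
    exact ⟨h1.symm, by rwa [ortho, dotProduct_comm]⟩⟩
  loopless := ⟨by rintro P ⟨h, _⟩; exact h rfl⟩

/-!
For distinct points `P ≠ Q` of the projective plane, the only point orthogonal to both is
`P × Q`: the vector `P ⨯₃ Q` is nonzero, and for `R` orthogonal to `P` and `Q` the identity
`R ⨯₃ (P ⨯₃ Q) = (R ⬝ᵥ Q) P - (P ⬝ᵥ R) Q` shows that `R` is parallel to it.
Hence two distinct vertices of `G̅_q` have at most one common neighbour, which rules out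
4-cycles and makes paths of length two unique, and two distinct non-adjacent vertices have
`P × Q` as a common neighbour, which bounds the diameter by two.
-/

namespace SimpleGraph

variable {V : Type*} {G : SimpleGraph V} {u v : V}

lemma Walk.getVert_one_mem_commonNeighbors {p : G.Walk u v} (hp : p.length = 2) :
    p.getVert 1 ∈ G.commonNeighbors u v := by
  have h₀ := p.adj_getVert_succ (i := 0) (by omega)
  have h₁ := p.adj_getVert_succ (i := 1) (by omega)
  rw [p.getVert_zero] at h₀
  rw [p.getVert_of_length_le hp.le] at h₁
  exact ⟨h₀, h₁.symm⟩

lemma Walk.ext_of_length_le_two {p q : G.Walk u v} (hl : p.length = q.length)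
    (h₂ : p.length ≤ 2) (h : p.getVert 1 = q.getVert 1) : p = q := by
  refine Walk.ext_getVert_le_length hl fun k hk => ?_
  have : k ≤ 2 := hk.trans h₂
  interval_cases k
  · simp only [getVert_zero]
  · exact h
  · rw [p.getVert_of_length_le h₂, q.getVert_of_length_le (hl ▸ h₂)]

theorem Reachable.existsUnique_path_length_eq_dist (hr : G.Reachable u v)
    (hd : G.dist u v ≤ 2) (hG : (G.commonNeighbors u v).Subsingleton) :
    ∃! p : G.Walk u v, p.IsPath ∧ p.length = G.dist u v := by
  obtain ⟨p, hp⟩ := hr.exists_path_of_dist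
  refine ⟨p, hp, fun q ⟨_, hq⟩ => Walk.ext_of_length_le_two (hq.trans hp.2.symm) (by omega) ?_⟩
  rcases (show G.dist u v ≤ 1 ∨ G.dist u v = 2 by omega) with h | h
  · rw [q.getVert_of_length_le (by omega), p.getVert_of_length_le (by omega)]
  · exact hG (q.getVert_one_mem_commonNeighbors (hq.trans h))
      (p.getVert_one_mem_commonNeighbors (hp.2.trans h))

theorem Walk.IsCycle.length_ne_four
    (hG : ∀ u v : V, u ≠ v → (G.commonNeighbors u v).Subsingleton)
    {c : G.Walk v v} (hc : c.IsCycle) : c.length ≠ 4 := by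
  intro h4
  have hv : v ≠ c.getVert 2 := fun h => by
    have := (hc.getVert_endpoint_iff (i := 2) (by omega)).1 h.symm
    omega
  have h₁ := c.adj_getVert_succ (i := 0) (by omega)
  have h₂ := c.adj_getVert_succ (i := 1) (by omega)
  have h₃ := c.adj_getVert_succ (i := 2) (by omega)
  have h₄ := c.adj_getVert_succ (i := 3) (by omega)
  rw [c.getVert_zero] at h₁
  rw [c.getVert_of_length_le (i := 3 + 1) h4.le] at h₄
  exact hc.getVert_sub_one_ne_getVert_add_one (i := 2) (by omega)
    (hG _ _ hv ⟨h₁, h₂.symm⟩ ⟨h₄.symm, h₃⟩)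

end SimpleGraph

open scoped LinearAlgebra.Projectivization

section Polarity

open Matrix

variable {F : Type} [Field F]

lemma ortho_comm {P Q : ℙ F (Fin 3 → F)} : ortho P Q ↔ ortho Q P := by
  rw [ortho, ortho, dotProduct_comm]

lemma rep_mk_dotProduct_eq_zero_iff {x : Fin 3 → F} (hx : x ≠ 0) (v : Fin 3 → F) :
    (mk F x hx).rep ⬝ᵥ v = 0 ↔ x ⬝ᵥ v = 0 := by
  obtain ⟨a, ha⟩ := exists_smul_eq_mk_rep F x hx
  rw [← ha, Units.smul_def, smul_dotProduct, smul_eq_mul, mul_eq_zero, or_iff_right a.ne_zero]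

lemma ortho_mk_mk {x y : Fin 3 → F} (hx : x ≠ 0) (hy : y ≠ 0) :
    ortho (mk F x hx) (mk F y hy) ↔ x ⬝ᵥ y = 0 := by
  rw [ortho, rep_mk_dotProduct_eq_zero_iff, dotProduct_comm, rep_mk_dotProduct_eq_zero_iff,
    dotProduct_comm]

lemma cross_rep_eq_zero_iff {P Q : ℙ F (Fin 3 → F)} : P.rep ⨯₃ Q.rep = 0 ↔ P = Q := by
  rw [← not_iff_not, ← ne_eq, crossProduct_ne_zero_iff_linearIndependent,
    linearIndependent_pair_iff_ne]

noncomputable def crossPoint {P Q : ℙ F (Fin 3 → F)} (h : P ≠ Q) : ℙ F (Fin 3 → F) :=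
  mk F (P.rep ⨯₃ Q.rep) (cross_rep_eq_zero_iff.not.2 h)

lemma ortho_iff_eq_crossPoint {P Q : ℙ F (Fin 3 → F)} (h : P ≠ Q) (R : ℙ F (Fin 3 → F)) :
    ortho P R ∧ ortho Q R ↔ R = crossPoint h := by
  constructor
  · rintro ⟨hP, hQ⟩
    obtain ⟨a, ha⟩ := exists_smul_eq_mk_rep F _ (cross_rep_eq_zero_iff.not.2 h)
    rw [← cross_rep_eq_zero_iff, crossPoint, ← ha, Units.smul_def, map_smul,
      cross_cross_eq_smul_sub_smul', dotProduct_comm P.rep]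
    rw [ortho_comm, ortho] at hP hQ
    simp [hP, hQ]
  · rintro rfl
    rw [ortho_comm, ortho_comm (P := Q), ortho, ortho, crossPoint, rep_mk_dotProduct_eq_zero_iff,
      rep_mk_dotProduct_eq_zero_iff, dotProduct_comm, dot_self_cross, dotProduct_comm,
      dot_cross_self]
    exact ⟨rfl, rfl⟩

lemma exists_ne_not_ortho : ∃ P Q : ℙ F (Fin 3 → F), P ≠ Q ∧ ¬ ortho P Q := by
  have hx : ![(1 : F), 0, 0] ≠ 0 := fun h => by simpa using congrFun h 0
  have hy : ![(1 : F), 1, 0] ≠ 0 := fun h => by simpa using congrFun h 0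
  refine ⟨mk F _ hx, mk F _ hy, ?_, ?_⟩
  · rw [Ne, mk_eq_mk_iff']
    rintro ⟨a, ha⟩
    have h₀ := congrFun ha 0
    have h₁ := congrFun ha 1
    simp only [Fin.isValue, Pi.smul_apply, cons_val_zero, cons_val_one, smul_eq_mul,
      mul_one] at h₀ h₁
    exact one_ne_zero (h₀ ▸ h₁)
  · simp [ortho_mk_mk, dotProduct, Fin.sum_univ_three]

lemma polarityGraph_commonNeighbors_subsingleton {u v : ℙ F (Fin 3 → F)} (h : u ≠ v) : ((polarityGraph F).commonNeighbors u v).Subsingleton := by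
  rintro R ⟨hu, hv⟩ S ⟨hu', hv'⟩
  rw [(ortho_iff_eq_crossPoint h R).1 ⟨hu.2, hv.2⟩, (ortho_iff_eq_crossPoint h S).1 ⟨hu'.2, hv'.2⟩]

lemma polarityGraph_exists_walk_length_le_two (u v : ℙ F (Fin 3 → F)) :
    ∃ p : (polarityGraph F).Walk u v, p.length ≤ 2 := by
  rcases eq_or_ne u v with rfl | huv
  · exact ⟨.nil, by simp⟩
  by_cases hadj : (polarityGraph F).Adj u v
  · exact ⟨hadj.toWalk, by simp⟩
  obtain ⟨hu, hv⟩ := (ortho_iff_eq_crossPoint huv _).2 rfl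
  have hne_u : u ≠ crossPoint huv := fun h => hadj ⟨huv, ortho_comm.1 (h ▸ hv)⟩
  have hne_v : crossPoint huv ≠ v := fun h => hadj ⟨huv, h ▸ hu⟩
  have hadj_u : (polarityGraph F).Adj u (crossPoint huv) := ⟨hne_u, hu⟩
  have hadj_v : (polarityGraph F).Adj (crossPoint huv) v := ⟨hne_v, ortho_comm.1 hv⟩
  exact ⟨.cons hadj_u (.cons hadj_v .nil), by simp⟩

end Polarity

theorem polarityGraph_unique_shortest_path_general (F : Type) [Field F] :
    (∀ u v : Projectivization F (Fin 3 → F), u ≠ v →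
      ∃! p : (polarityGraph F).Walk u v,
        p.IsPath ∧ p.length = (polarityGraph F).dist u v) ∧
    (∀ (v : Projectivization F (Fin 3 → F)) (c : (polarityGraph F).Walk v v),
      c.IsCycle → c.length ≠ 4) ∧
    (∀ u v, (polarityGraph F).dist u v ≤ 2) ∧
    (∃ u v, (polarityGraph F).dist u v = 2) := by
  have hreach (u v) : (polarityGraph F).Reachable u v :=
    (polarityGraph_exists_walk_length_le_two u v).elim fun p _ => ⟨p⟩
  have hdist (u v) : (polarityGraph F).dist u v ≤ 2 :=
    (polarityGraph_exists_walk_length_le_two u v).elim fun p hp => (SimpleGraph.dist_le p).trans hp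
  refine ⟨fun u v huv => (hreach u v).existsUnique_path_length_eq_dist (hdist u v)
      (polarityGraph_commonNeighbors_subsingleton huv),
    fun _ _ hc => hc.length_ne_four fun _ _ => polarityGraph_commonNeighbors_subsingleton,
    hdist, ?_⟩
  obtain ⟨u, v, huv, hnot⟩ := exists_ne_not_ortho (F := F)
  exact ⟨u, v, le_antisymm (hdist u v)
    ((hreach u v).one_lt_dist_of_ne_of_not_adj huv fun hadj => hnot hadj.2)⟩

/-- Between any two distinct vertices of `G̅_q` there is a unique minimum path; in
particular `G̅_q` contains no 4-cycle and has diameter 2. -/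
theorem polarityGraph_unique_shortest_path (q : ℕ) (hq : IsPrimePow q)
    (F : Type) [Field F] [Fintype F] (hF : Fintype.card F = q) :
    (∀ u v : Projectivization F (Fin 3 → F), u ≠ v →
      ∃! p : (polarityGraph F).Walk u v,
        p.IsPath ∧ p.length = (polarityGraph F).dist u v) ∧
    (∀ (v : Projectivization F (Fin 3 → F)) (c : (polarityGraph F).Walk v v),
      c.IsCycle → c.length ≠ 4) ∧
    (∀ u v, (polarityGraph F).dist u v ≤ 2) ∧
    (∃ u v, (polarityGraph F).dist u v = 2) :=
  polarityGraph_unique_shortest_path_general F
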